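/- arXiv:2104.00552 — 5 statements merged into one kernel-verified Lean document; each statement's English description precedes it below -/
import Mathlib

section
/- Let G be a finite simple graph with a dominating vertex v (a vertex adjacent to all other vertices of G), and let G − v be the graph obtained from G by deleting v and all its incident edges. Then A(G) = 1 + A(G − v). -/
open Finset SimpleGraph

/-- A coloring partition of `G`: a partition of the vertex set into (nonempty)
independent (stable) sets. -/
def IsStablePartition {V : Type*} [Fintype V] [DecidableEq V] (G : SimpleGraph V)
    (P : Finpartition (univ : Finset V)) : Prop :=
  ∀ t ∈ P.parts, ∀ u ∈ t, ∀ v ∈ t, ¬ G.Adj u v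

open scoped Classical in
/-- `colB G` : the number of coloring partitions of `G`. -/
noncomputable def colB {V : Type*} [Fintype V] [DecidableEq V] (G : SimpleGraph V) : ℕ :=
  (univ.filter (IsStablePartition G)).card

open scoped Classical in
/-- `colT G` : the total number of blocks summed over all coloring partitions of `G`. -/
noncomputable def colT {V : Type*} [Fintype V] [DecidableEq V] (G : SimpleGraph V) : ℕ :=
  ∑ P ∈ univ.filter (IsStablePartition G), P.parts.card

/-- `colA G = colT G / colB G` : the average number of blocks. -/
noncomputable def colA {V : Type*} [Fintype V] [DecidableEq V] (G : SimpleGraph V) : ℚ :=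
  (colT G : ℚ) / (colB G : ℚ)

/-- The `n`-th Bell number: the number of partitions of an `n`-element set. -/
noncomputable def bell (n : ℕ) : ℕ :=
  Fintype.card (Finpartition (univ : Finset (Fin n)))

/-- The disjoint union of `G` with `p` isolated vertices (`G ∪ pK₁`). -/
def unionIsolated {V : Type*} (G : SimpleGraph V) (p : ℕ) : SimpleGraph (V ⊕ Fin p) :=
  SimpleGraph.fromRel (fun x y => ∃ a b, x = Sum.inl a ∧ y = Sum.inl b ∧ G.Adj a b)

/-- `Hgraph n r` : the graph obtained from the disjoint union of the cycle `C_n` and the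
path `P_r` by adding an edge between one endpoint of the path (vertex `0`) and one vertex
of the cycle (vertex `0`). -/
def Hgraph (n r : ℕ) : SimpleGraph (Fin n ⊕ Fin r) :=
  SimpleGraph.fromRel (fun x y =>
    (∃ a b, x = Sum.inl a ∧ y = Sum.inl b ∧ (cycleGraph n).Adj a b) ∨
    (∃ a b, x = Sum.inr a ∧ y = Sum.inr b ∧ (pathGraph r).Adj a b) ∨
    (∃ (a : Fin n) (b : Fin r), a.val = 0 ∧ b.val = 0 ∧ x = Sum.inl a ∧ y = Sum.inr b))



/-! A dominating vertex `v` forms a singleton block in every coloring partition of `G`, since no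
other vertex may share a block with it. Deleting that block is therefore a bijection from the
coloring partitions of `G` onto those of `G - v` which lowers the number of blocks by exactly one,
so `B(G) = B(G - v)` and `T(G) = T(G - v) + B(G - v)`. -/

@[simp]
lemma Finset.subtype_map_subtype {α : Type*} (p : α → Prop) [DecidablePred p]
    (s : Finset (Subtype p)) : (s.map (Function.Embedding.subtype p)).subtype p = s := by
  ext x; simp [x.2]

namespace Finpartition

variable {α β : Type*} [DecidableEq α] [DecidableEq β] {s : Finset α}

def finsetMap (f : α ↪ β) (P : Finpartition s) : Finpartition (s.map f) where
  parts := P.parts.map (mapEmbedding f).toEmbedding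
  supIndep := by
    rw [supIndep_iff_pairwiseDisjoint, coe_map,
      (mapEmbedding f).toEmbedding.injective.injOn.pairwiseDisjoint_image]
    exact P.pairwiseDisjoint_apply map_inter (map_empty f)
  sup_parts := by
    rw [sup_map]
    exact P.sup_parts_apply map_union (map_empty f)
  bot_notMem := by simp

@[simp]
lemma parts_finsetMap (f : α ↪ β) (P : Finpartition s) :
    (P.finsetMap f).parts = P.parts.map (mapEmbedding f).toEmbedding :=
  rfl

lemma card_parts_finsetMap (f : α ↪ β) (P : Finpartition s) :
    #(P.finsetMap f).parts = #P.parts :=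
  card_map _

def subtype (p : α → Prop) [DecidablePred p] (P : Finpartition s) : Finpartition (s.subtype p) :=
  ofErase (P.parts.image (Finset.subtype p))
    (SupIndep.image <| supIndep_iff_pairwiseDisjoint.2 <|
      P.pairwiseDisjoint_apply (fun _ _ ↦ by ext; simp) (by ext; simp))
    (by
      rw [sup_image]
      exact P.sup_parts_apply (fun _ _ ↦ by ext; simp) (by ext; simp))

@[simp]
lemma parts_subtype (p : α → Prop) [DecidablePred p] (P : Finpartition s) :
    (P.subtype p).parts = (P.parts.image (Finset.subtype p)).erase ∅ :=
  rfl

end Finpartition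

section ColoringPartition

variable {V : Type*} [Fintype V] [DecidableEq V]

lemma isStablePartition_bot (G : SimpleGraph V) : IsStablePartition G ⊥ := by
  intro t ht x hx y hy hxy
  obtain ⟨a, -, rfl⟩ := Finpartition.mem_bot_iff.1 ht
  rw [mem_singleton] at hx hy
  exact hxy.ne (hx.trans hy.symm)

lemma colB_pos (G : SimpleGraph V) : 0 < colB G := by
  classical
  exact card_pos.2 ⟨⊥, mem_filter.2 ⟨mem_univ _, isStablePartition_bot G⟩⟩

def insertSingletonPart (v : V) (Q : Finpartition (univ : Finset {w : V | w ≠ v})) :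
    Finpartition (univ : Finset V) :=
  (Q.finsetMap (.subtype _)).extend (b := {v}) (singleton_ne_empty v)
    (disjoint_singleton_right.2 (by simp)) (by ext w; by_cases w = v <;> simp [*])

def eraseVertex (v : V) (P : Finpartition (univ : Finset V)) :
    Finpartition (univ : Finset {w : V | w ≠ v}) :=
  (P.subtype _).copy (by ext; simp)

@[simp]
lemma card_parts_insertSingletonPart (v : V) (Q : Finpartition (univ : Finset {w : V | w ≠ v})) :
    #(insertSingletonPart v Q).parts = #Q.parts + 1 := by
  rw [insertSingletonPart, Finpartition.card_extend, Finpartition.card_parts_finsetMap]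

lemma eraseVertex_insertSingletonPart (v : V) (Q : Finpartition (univ : Finset {w : V | w ≠ v})) :
    eraseVertex v (insertSingletonPart v Q) = Q := by
  have hv : ({v} : Finset V).subtype (· ∈ {w : V | w ≠ v}) = ∅ := subtype_eq_empty.2 (by simp)
  apply Finpartition.ext
  simp only [eraseVertex, insertSingletonPart, Finpartition.copy_parts, Finpartition.parts_subtype,
    Finpartition.extend_parts, Finpartition.parts_finsetMap]
  rw [map_eq_image, image_insert, hv, image_image, erase_insert_eq_erase]
  simp [Function.comp_def]

variable {G : SimpleGraph V} {v : V} {P : Finpartition (univ : Finset V)}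

lemma IsStablePartition.eq_singleton_of_mem (hdom : ∀ w, w ≠ v → G.Adj v w)
    (hP : IsStablePartition G P) {t : Finset V} (ht : t ∈ P.parts) (hvt : v ∈ t) : t = {v} :=
  eq_singleton_iff_unique_mem.2
    ⟨hvt, fun w hw ↦ by_contra fun hwv ↦ hP t ht v hvt w hw (hdom w hwv)⟩

lemma IsStablePartition.singleton_mem_parts (hdom : ∀ w, w ≠ v → G.Adj v w)
    (hP : IsStablePartition G P) : {v} ∈ P.parts := by
  obtain ⟨t, ht, hvt⟩ := P.exists_mem (mem_univ v)
  rwa [← hP.eq_singleton_of_mem hdom ht hvt]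

lemma insertSingletonPart_eraseVertex (hdom : ∀ w, w ≠ v → G.Adj v w)
    (hP : IsStablePartition G P) : insertSingletonPart v (eraseVertex v P) = P := by
  apply Finpartition.ext
  ext t
  simp only [eraseVertex, insertSingletonPart, Finpartition.copy_parts, Finpartition.extend_parts,
    Finpartition.parts_finsetMap, Finpartition.parts_subtype, map_erase, RelEmbedding.coe_toEmbedding,
    mapEmbedding_apply, map_empty, mem_insert, mem_erase, mem_map, mem_image,
    exists_exists_and_eq_and, subtype_map, ne_eq, Set.mem_ofPred_eq]
  constructor
  · rintro (rfl | ⟨hne, s, hs, rfl⟩)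
    · exact hP.singleton_mem_parts hdom
    · by_cases hvs : v ∈ s
      · rw [hP.eq_singleton_of_mem hdom hs hvs] at hne
        simp at hne
      · rwa [filter_true_of_mem fun x hx ↦ ne_of_mem_of_not_mem hx hvs]
  · intro ht
    by_cases hvt : v ∈ t
    · exact .inl (hP.eq_singleton_of_mem hdom ht hvt)
    · exact .inr ⟨P.ne_empty ht, t, ht, filter_true_of_mem fun x hx ↦ ne_of_mem_of_not_mem hx hvt⟩

lemma IsStablePartition.eraseVertex (hP : IsStablePartition G P) :
    IsStablePartition (G.induce {w | w ≠ v}) (eraseVertex v P) := by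
  intro t ht x hx y hy hxy
  simp only [_root_.eraseVertex, Finpartition.copy_parts, Finpartition.parts_subtype, mem_erase,
    mem_image] at ht
  obtain ⟨-, s, hs, rfl⟩ := ht
  exact hP s hs x (mem_subtype.1 hx) y (mem_subtype.1 hy) hxy

lemma IsStablePartition.insertSingletonPart {Q : Finpartition (univ : Finset {w : V | w ≠ v})}
    (hQ : IsStablePartition (G.induce {w | w ≠ v}) Q) :
    IsStablePartition G (insertSingletonPart v Q) := by
  intro t ht x hx y hy hxy
  simp only [_root_.insertSingletonPart, Finpartition.extend_parts, Finpartition.parts_finsetMap,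
    mem_insert, mem_map, RelEmbedding.coe_toEmbedding, mapEmbedding_apply] at ht
  obtain rfl | ⟨s, hs, rfl⟩ := ht
  · rw [mem_singleton] at hx hy
    exact hxy.ne (hx.trans hy.symm)
  · obtain ⟨x, hxs, rfl⟩ := mem_map.1 hx
    obtain ⟨y, hys, rfl⟩ := mem_map.1 hy
    exact hQ s hs x hxs y hys hxy

lemma insertSingletonPart_injective (v : V) : Function.Injective (insertSingletonPart v) :=
  Function.LeftInverse.injective (g := eraseVertex v) (eraseVertex_insertSingletonPart v)

open scoped Classical in
lemma filter_isStablePartition_eq_image (hdom : ∀ w, w ≠ v → G.Adj v w) :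
    univ.filter (IsStablePartition G) =
      (univ.filter (IsStablePartition (G.induce {w | w ≠ v}))).image (insertSingletonPart v) := by
  ext P
  simp only [mem_filter, mem_univ, true_and, mem_image]
  exact ⟨fun hP ↦ ⟨_, hP.eraseVertex, insertSingletonPart_eraseVertex hdom hP⟩,
    by rintro ⟨Q, hQ, rfl⟩; exact hQ.insertSingletonPart⟩

lemma colB_eq_of_dominating (hdom : ∀ w, w ≠ v → G.Adj v w) :
    colB G = colB (G.induce {w | w ≠ v}) := by
  rw [colB, colB, filter_isStablePartition_eq_image hdom,
    card_image_of_injective _ (insertSingletonPart_injective v)]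

lemma colT_eq_of_dominating (hdom : ∀ w, w ≠ v → G.Adj v w) :
    colT G = colT (G.induce {w | w ≠ v}) + colB (G.induce {w | w ≠ v}) := by
  rw [colT, colT, colB, filter_isStablePartition_eq_image hdom,
    sum_image fun _ _ _ _ h ↦ insertSingletonPart_injective v h]
  simp [sum_add_distrib]

end ColoringPartition

/-- If `G` has a dominating vertex `v`, then `A(G) = 1 + A(G - v)`. -/
theorem stmt_0 {V : Type*} [Fintype V] [DecidableEq V] (G : SimpleGraph V) (v : V)
    (hdom : ∀ w, w ≠ v → G.Adj v w) :
    colA G = 1 + colA (G.induce {w | w ≠ v}) := by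
  have hB : (colB (G.induce {w | w ≠ v}) : ℚ) ≠ 0 := by exact_mod_cast (colB_pos _).ne'
  rw [colA, colA, colT_eq_of_dominating hdom, colB_eq_of_dominating hdom]
  push_cast
  field_simp
  ring
end

section
/- Let G be a tree of order n ≥ 1 (a connected acyclic finite simple graph on n vertices). Then B(G) = B_{n−1} and T(G) = B_n, where B_k denotes the k-th Bell number. -/
open Finset SimpleGraph

/-!
Root the tree at `r` and build it up by adding vertices in order of increasing distance from `r`:
each new vertex `a` is then a leaf, adjacent to exactly one earlier vertex `u`. A coloring
partition of the larger vertex set is a coloring partition of the smaller one together with the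
block receiving `a`: a new singleton or one of the blocks not containing `u`. So, for any weight
`f`, the sum of `f (#blocks)` over the coloring partitions after adding the leaf is the sum of
`m ↦ f (m + 1) + (m - 1) * f m` before; for a vertex without neighbours (as in the edgeless graph,
whose coloring partitions are all partitions) the new weight is `m ↦ f (m + 1) + m * f m`.
Shifting the weight by one block turns the first rule into the second, so the sum of
`f (#blocks)` over the coloring partitions of a tree on `n` vertices is the sum of
`f (#blocks + 1)` over all partitions of an `(n - 1)`-set. For `f = 1` this is `B_{n-1}`; for
`f = id` it counts the ways to add one more element to a partition of an `(n - 1)`-set, i.e. `B_n`.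
-/

namespace Finpartition

variable {α : Type*} [DecidableEq α] {s : Finset α} {a : α}

lemma subset_of_mem_insert_empty (P : Finpartition s) {T : Finset α}
    (hT : T ∈ insert ∅ P.parts) : T ⊆ s := by
  rcases mem_insert.1 hT with rfl | hT
  exacts [empty_subset s, P.le hT]

lemma notMem_of_mem_parts (P : Finpartition s) (ha : a ∉ s) {t : Finset α} (ht : t ∈ P.parts) :
    a ∉ t :=
  fun h => ha (P.le ht h)

lemma not_subset_singleton_of_mem_parts (P : Finpartition s) (ha : a ∉ s) {t : Finset α}
    (ht : t ∈ P.parts) : ¬t ⊆ {a} := fun h => by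
  obtain ⟨x, hx⟩ := P.nonempty_of_mem_parts ht
  exact P.notMem_of_mem_parts ha ht (mem_singleton.1 (h hx) ▸ hx)

lemma sup_parts_erase (P : Finpartition s) {T : Finset α} (hT : T ∈ insert ∅ P.parts) :
    (P.parts.erase T).sup id = s \ T := by
  ext x
  simp only [mem_sup, mem_erase, id, mem_sdiff]
  constructor
  · rintro ⟨t, ⟨htT, ht⟩, hxt⟩
    refine ⟨P.le ht hxt, fun hxT => htT ?_⟩
    rcases mem_insert.1 hT with rfl | hT
    · simp at hxT
    · exact P.eq_of_mem_parts ht hT hxt hxT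
  · rintro ⟨hxs, hxT⟩
    obtain ⟨t, ht, hxt⟩ := P.exists_mem hxs
    exact ⟨t, ⟨by rintro rfl; exact hxT hxt, ht⟩, hxt⟩

/-- Adds `a` to the block `T` of `P`; `T = ∅` stands for the new block `{a}`. -/
def addToPart (P : Finpartition s) (ha : a ∉ s) {T : Finset α} (hT : T ∈ insert ∅ P.parts) :
    Finpartition (insert a s) :=
  (P.ofSubset (erase_subset T P.parts) (P.sup_parts_erase hT)).extend (insert_ne_empty a T)
    (disjoint_left.2 fun x hx hxT => by
      rcases mem_insert.1 hxT with rfl | hxT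
      · exact ha (mem_sdiff.1 hx).1
      · exact (mem_sdiff.1 hx).2 hxT)
    (by
      have hTs := P.subset_of_mem_insert_empty hT
      ext x
      have := @hTs x
      simp only [sup_eq_union, mem_union, mem_sdiff, mem_insert]
      tauto)

@[simp]
lemma parts_addToPart (P : Finpartition s) (ha : a ∉ s) {T : Finset α}
    (hT : T ∈ insert ∅ P.parts) :
    (P.addToPart ha hT).parts = insert (insert a T) (P.parts.erase T) := rfl

lemma part_addToPart (P : Finpartition s) (ha : a ∉ s) {T : Finset α}
    (hT : T ∈ insert ∅ P.parts) : (P.addToPart ha hT).part a = insert a T :=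
  part_eq_of_mem _ (by simp) (mem_insert_self a T)

lemma card_parts_addToPart (P : Finpartition s) (ha : a ∉ s) {T : Finset α}
    (hT : T ∈ insert ∅ P.parts) :
    #(P.addToPart ha hT).parts = #P.parts + if T = ∅ then 1 else 0 := by
  rw [parts_addToPart, card_insert_of_notMem]
  · split_ifs with h
    · rw [h, erase_eq_of_notMem P.empty_notMem_parts]
    · have hT : T ∈ P.parts := (mem_insert.1 hT).resolve_left h
      rw [card_erase_of_mem hT]
      have := card_pos.2 ⟨T, hT⟩
      omega
  · exact fun h => P.notMem_of_mem_parts ha (mem_of_mem_erase h) (mem_insert_self a T)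

def erase (Q : Finpartition (insert a s)) (ha : a ∉ s) : Finpartition s :=
  (Q.avoid {a}).copy (by rw [sdiff_singleton_eq_erase, erase_insert ha])

lemma mem_parts_erase {Q : Finpartition (insert a s)} (ha : a ∉ s) {t : Finset α} :
    t ∈ (Q.erase ha).parts ↔ ∃ d ∈ Q.parts, ¬d ⊆ {a} ∧ d.erase a = t := by
  simp [Finpartition.erase, sdiff_singleton_eq_erase]

lemma erase_part_mem (Q : Finpartition (insert a s)) (ha : a ∉ s) :
    (Q.part a).erase a ∈ insert ∅ (Q.erase ha).parts := by
  by_cases h : (Q.part a).erase a = ∅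
  · exact h ▸ mem_insert_self _ _
  refine mem_insert_of_mem ((mem_parts_erase ha).2 ⟨Q.part a, by simp, fun hsub => h ?_, rfl⟩)
  rcases subset_singleton_iff.1 hsub with hsub | hsub <;> simp [hsub]

lemma addToPart_erase (Q : Finpartition (insert a s)) (ha : a ∉ s) :
    (Q.erase ha).addToPart ha (Q.erase_part_mem ha) = Q := by
  ext t
  rw [parts_addToPart, insert_erase (by simp), mem_insert, mem_erase, mem_parts_erase]
  constructor
  · rintro (rfl | ⟨htne, d, hd, -, rfl⟩)
    · simp
    · have had : a ∉ d := fun had => htne (by rw [Q.part_eq_of_mem hd had])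
      rwa [erase_eq_of_notMem had]
  · intro ht
    by_cases hta : t = Q.part a
    · exact Or.inl hta
    have hat : a ∉ t := fun hat => hta (Q.part_eq_of_mem ht hat).symm
    obtain ⟨x, hx⟩ := Q.nonempty_of_mem_parts ht
    refine Or.inr ⟨fun h => hta ?_, t, ht, fun hsub => ?_, erase_eq_of_notMem hat⟩
    · exact Q.eq_of_mem_parts ht (by simp) hx (mem_of_mem_erase (h ▸ hx))
    · exact hat (mem_singleton.1 (hsub hx) ▸ hx)

lemma erase_addToPart (P : Finpartition s) (ha : a ∉ s) {T : Finset α}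
    (hT : T ∈ insert ∅ P.parts) : (P.addToPart ha hT).erase ha = P := by
  have haT : a ∉ T := fun h => ha (P.subset_of_mem_insert_empty hT h)
  ext t
  rw [mem_parts_erase, parts_addToPart]
  constructor
  · rintro ⟨d, hd, hda, rfl⟩
    rcases mem_insert.1 hd with rfl | hd
    · rw [erase_insert haT]
      rcases mem_insert.1 hT with rfl | hT
      · simp at hda
      · exact hT
    · rw [erase_eq_of_notMem (P.notMem_of_mem_parts ha (mem_of_mem_erase hd))]
      exact mem_of_mem_erase hd
  · intro ht
    by_cases htT : t = T
    · subst htT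
      refine ⟨insert a t, mem_insert_self _ _, fun hsub => ?_, erase_insert haT⟩
      exact P.not_subset_singleton_of_mem_parts ha ht ((subset_insert a t).trans hsub)
    · exact ⟨t, mem_insert_of_mem (mem_erase.2 ⟨htT, ht⟩),
        P.not_subset_singleton_of_mem_parts ha ht,
        erase_eq_of_notMem (P.notMem_of_mem_parts ha ht)⟩

def insertEquiv (ha : a ∉ s) :
    Finpartition (insert a s) ≃ Σ P : Finpartition s, {T // T ∈ insert ∅ P.parts} where
  toFun Q := ⟨Q.erase ha, _, Q.erase_part_mem ha⟩
  invFun x := x.1.addToPart ha x.2.2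
  left_inv Q := Q.addToPart_erase ha
  right_inv := fun ⟨P, T, hT⟩ => by
    refine Sigma.subtype_ext (P.erase_addToPart ha hT) ?_
    have haT : a ∉ T := fun h => ha (P.subset_of_mem_insert_empty hT h)
    simp [part_addToPart, haT]

lemma sum_finpartition_insert (ha : a ∉ s) {M : Type*} [AddCommMonoid M]
    (g : Finpartition (insert a s) → M) :
    ∑ Q, g Q =
      ∑ P : Finpartition s, ∑ T : {T // T ∈ insert ∅ P.parts}, g (P.addToPart ha T.2) := by
  rw [← Fintype.sum_equiv (insertEquiv ha).symm _ g fun _ => rfl]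
  exact Fintype.sum_sigma _

def IsStable (G : SimpleGraph α) (P : Finpartition s) : Prop :=
  ∀ t ∈ P.parts, ∀ u ∈ t, ∀ v ∈ t, ¬G.Adj u v

lemma isStable_addToPart_iff (G : SimpleGraph α) (P : Finpartition s) (ha : a ∉ s)
    {T : Finset α} (hT : T ∈ insert ∅ P.parts) :
    (P.addToPart ha hT).IsStable G ↔ P.IsStable G ∧ ∀ v ∈ T, ¬G.Adj a v := by
  simp only [IsStable, parts_addToPart]
  rw [forall_mem_insert]
  constructor
  · rintro ⟨hnew, hold⟩
    refine ⟨fun t ht u hu v hv => ?_,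
      fun v hv => hnew a (mem_insert_self a T) v (mem_insert_of_mem hv)⟩
    by_cases htT : t = T
    · subst htT
      exact hnew u (mem_insert_of_mem hu) v (mem_insert_of_mem hv)
    · exact hold t (mem_erase.2 ⟨htT, ht⟩) u hu v hv
  · rintro ⟨hP, haT⟩
    refine ⟨fun u hu v hv => ?_, fun t ht => hP t (mem_of_mem_erase ht)⟩
    rcases mem_insert.1 hu with rfl | hu <;> rcases mem_insert.1 hv with hv | hv
    · exact hv ▸ G.loopless.irrefl u
    · exact haT v hv
    · exact hv ▸ fun h => haT u hu h.symm
    · exact hP T ((mem_insert.1 hT).resolve_left (ne_empty_of_mem hu)) u hu v hv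

end Finpartition

/-- The sum `∑ f (#blocks)` over all partitions of an `n`-element set (`partitionSum_bot`). -/
def blockSum : ℕ → (ℕ → ℕ) → ℕ
  | 0, f => f 0
  | n + 1, f => blockSum n fun m => f (m + 1) + m * f m

namespace SimpleGraph

section Distance

variable {V : Type*} {G : SimpleGraph V}

theorem Connected.exists_adj_dist_lt (hG : G.Connected) {r v : V} (hv : v ≠ r) :
    ∃ u, G.Adj v u ∧ G.dist r u < G.dist r v := by
  obtain ⟨q, hq⟩ := hG.exists_walk_length_eq_dist v r
  obtain ⟨u, hvu, q', rfl⟩ := Walk.exists_eq_cons_of_ne hv q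
  refine ⟨u, hvu, ?_⟩
  rw [dist_comm, G.dist_comm (u := r), ← hq, Walk.length_cons]
  exact Nat.lt_succ_of_le (dist_le q')

theorem IsAcyclic.eq_of_adj_of_dist_lt (hG : G.IsAcyclic) {r v u w : V} (hr : G.Reachable r v)
    (hu : G.Adj u v) (hw : G.Adj w v) (hdu : G.dist r u < G.dist r v)
    (hdw : G.dist r w < G.dist r v) : u = w := by
  classical
  obtain ⟨q, hq, -⟩ := hr.exists_path_of_dist
  suffices h : ∀ x, G.Adj x v → G.dist r x < G.dist r v → x = q.penultimate from
    (h u hu hdu).trans (h w hw hdw).symm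
  intro x hx hdx
  obtain ⟨p, hp, hpl⟩ := (hr.trans hx.symm.reachable).exists_path_of_dist
  have hvp : v ∉ p.support := fun hvp => by
    have := (dist_le (p.takeUntil v hvp)).trans (p.length_takeUntil_le_length hvp)
    omega
  exact hG.eq_penultimate_of_adj_end hq hx.symm
    (hG.mem_support_of_ne_mem_support_of_adj_of_isPath hq hp hx.symm hvp)

end Distance

variable {V : Type*} [DecidableEq V]

open scoped Classical in
noncomputable def partitionSum (G : SimpleGraph V) (s : Finset V) (f : ℕ → ℕ) : ℕ :=
  ∑ P : Finpartition s with P.IsStable G, f #P.parts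

section partitionSum

variable (G : SimpleGraph V)

theorem partitionSum_empty (f : ℕ → ℕ) : G.partitionSum ∅ f = f 0 := by
  have hparts (P : Finpartition (∅ : Finset V)) : P.parts = ∅ := P.parts_eq_empty_iff.2 rfl
  have : Unique (Finpartition (∅ : Finset V)) := Finpartition.instUniqueBot
  simp [partitionSum, Finpartition.IsStable, hparts]

open scoped Classical in
theorem partitionSum_insert {s : Finset V} {a : V} (ha : a ∉ s) (f : ℕ → ℕ) :
    G.partitionSum (insert a s) f = ∑ P : Finpartition s with P.IsStable G,
      (f (#P.parts + 1) + #{t ∈ P.parts | ∀ v ∈ t, ¬G.Adj a v} * f #P.parts) := by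
  simp only [partitionSum, sum_filter]
  rw [Finpartition.sum_finpartition_insert ha]
  refine sum_congr rfl fun P _ => ?_
  simp only [Finpartition.isStable_addToPart_iff, Finpartition.card_parts_addToPart]
  split_ifs with hP
  · simp only [hP, true_and]
    rw [sum_coe_sort (insert ∅ P.parts) (fun T => if ∀ v ∈ T, ¬G.Adj a v then
      f (#P.parts + if T = ∅ then 1 else 0) else 0), sum_insert P.empty_notMem_parts,
      if_pos (by simp), if_pos rfl,
      sum_congr rfl fun T hT => by rw [if_neg (P.ne_empty hT), add_zero], sum_ite, sum_const_zero,
      add_zero, sum_const, smul_eq_mul]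
  · simp [hP]

open scoped Classical in
theorem partitionSum_insert_of_forall_not_adj {s : Finset V} {a : V} (ha : a ∉ s)
    (hadj : ∀ v ∈ s, ¬G.Adj a v) (f : ℕ → ℕ) :
    G.partitionSum (insert a s) f = G.partitionSum s fun m => f (m + 1) + m * f m := by
  rw [partitionSum_insert G ha, partitionSum]
  refine sum_congr rfl fun P _ => ?_
  rw [filter_true_of_mem fun t ht v hv => hadj v (P.le ht hv)]

open scoped Classical in
theorem partitionSum_insert_of_adj_iff {s : Finset V} {a u : V} (ha : a ∉ s) (hu : u ∈ s)
    (hadj : ∀ v ∈ s, G.Adj a v ↔ v = u) (f : ℕ → ℕ) :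
    G.partitionSum (insert a s) f = G.partitionSum s fun m => f (m + 1) + (m - 1) * f m := by
  rw [partitionSum_insert G ha, partitionSum]
  refine sum_congr rfl fun P _ => ?_
  have : {t ∈ P.parts | ∀ v ∈ t, ¬G.Adj a v} = P.parts.erase (P.part u) := by
    ext t
    simp only [mem_filter, mem_erase]
    constructor
    · rintro ⟨ht, hnadj⟩
      exact ⟨fun h => hnadj u (h ▸ P.mem_part hu) ((hadj u hu).2 rfl), ht⟩
    · rintro ⟨htu, ht⟩
      refine ⟨ht, fun v hv hav => htu ?_⟩
      rw [(hadj v (P.le ht hv)).1 hav] at hv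
      exact (P.part_eq_of_mem ht hv).symm
  rw [this, card_erase_of_mem (P.part_mem.2 hu)]

end partitionSum

theorem partitionSum_bot (s : Finset V) (f : ℕ → ℕ) :
    (⊥ : SimpleGraph V).partitionSum s f = blockSum #s f := by
  induction s using Finset.induction_on generalizing f with
  | empty => exact partitionSum_empty ⊥ f
  | insert a s ha ih =>
    rw [partitionSum_insert_of_forall_not_adj ⊥ ha (fun _ _ => id), ih, card_insert_of_notMem ha,
      blockSum]

theorem bell_eq_blockSum (n : ℕ) : bell n = blockSum n fun _ => 1 := by
  classical
  have := partitionSum_bot (univ : Finset (Fin n)) fun _ => 1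
  rw [card_fin, partitionSum, filter_true_of_mem fun P _ _ _ _ _ _ _ => id] at this
  simpa [bell] using this

theorem IsTree.partitionSum_eq_blockSum {G : SimpleGraph V} (hG : G.IsTree) {r : V}
    {s : Finset V} (hr : r ∈ s)
    (hs : ∀ v ∈ s, v ≠ r → ∃ u ∈ s, G.Adj v u ∧ G.dist r u < G.dist r v) (f : ℕ → ℕ) :
    G.partitionSum s f = blockSum (#s - 1) fun m => f (m + 1) := by
  induction s using Finset.strongInduction generalizing f with | H s ih => ?_
  by_cases hsr : s = {r}
  · subst hsr
    rw [← insert_empty, partitionSum_insert_of_forall_not_adj G (notMem_empty r) (by simp),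
      partitionSum_empty]
    simp [blockSum]
  obtain ⟨v, hvs, hvr⟩ := (s.nontrivial_iff_ne_singleton hr).2 hsr |>.exists_ne r
  -- the vertex `a` farthest from `r` is a leaf of `s`, attached to `u`
  obtain ⟨a, has, hamax⟩ := s.exists_max_image (G.dist r) ⟨r, hr⟩
  have har : a ≠ r := by
    obtain ⟨u, -, -, hu⟩ := hs v hvs hvr
    rintro rfl
    have := hamax v hvs
    rw [dist_self] at this
    omega
  obtain ⟨u, hus, hau, hu⟩ := hs a has har
  have hadj : ∀ w ∈ s.erase a, G.Adj a w ↔ w = u := by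
    refine fun w hw => ⟨fun haw => ?_, fun hwu => hwu ▸ hau⟩
    have hw' : G.dist r w < G.dist r a :=
      lt_of_le_of_ne (hamax w (mem_of_mem_erase hw)) (hG.dist_ne_of_adj r haw).symm
    exact hG.isAcyclic.eq_of_adj_of_dist_lt (hG.connected r a) haw.symm hau.symm hw' hu
  have hrs' : r ∈ s.erase a := mem_erase.2 ⟨har.symm, hr⟩
  have hs' : ∀ v ∈ s.erase a, v ≠ r →
      ∃ u ∈ s.erase a, G.Adj v u ∧ G.dist r u < G.dist r v := by
    intro v hv hvr
    obtain ⟨u, hus, hvu, hu⟩ := hs v (mem_of_mem_erase hv) hvr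
    refine ⟨u, mem_erase.2 ⟨fun hua => ?_, hus⟩, hvu, hu⟩
    have := hamax v (mem_of_mem_erase hv)
    rw [hua] at hu
    omega
  have hcard : #s - 1 = #(s.erase a) - 1 + 1 := by
    have := card_pos.2 ⟨r, hrs'⟩
    rw [card_erase_of_mem has] at this ⊢
    omega
  have hus' : u ∈ s.erase a := mem_erase.2 ⟨G.ne_of_adj hau.symm, hus⟩
  rw [← insert_erase has, partitionSum_insert_of_adj_iff G (notMem_erase a s) hus' hadj,
    ih _ (erase_ssubset has) hrs' hs', insert_erase has, hcard, blockSum]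
  simp

end SimpleGraph

section Coloring

variable {V : Type*} [Fintype V] [DecidableEq V] (G : SimpleGraph V)

theorem colB_eq_partitionSum : colB G = G.partitionSum univ fun _ => 1 := by
  rw [colB, SimpleGraph.partitionSum, card_eq_sum_ones]
  rfl

theorem colT_eq_partitionSum : colT G = G.partitionSum univ id := rfl

end Coloring

/-- If `G` is a tree of order `n ≥ 1`, then `B(G) = bell (n-1)` and `T(G) = bell n`. -/
theorem stmt_1 {V : Type*} [Fintype V] [DecidableEq V] (G : SimpleGraph V) (n : ℕ)
    (hn : 1 ≤ n) (hcard : Fintype.card V = n) (hG : G.IsTree) :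
    colB G = bell (n - 1) ∧ colT G = bell n := by
  obtain ⟨r⟩ := hG.connected.nonempty
  have key (f : ℕ → ℕ) : G.partitionSum univ f = blockSum (n - 1) fun m => f (m + 1) := by
    rw [hG.partitionSum_eq_blockSum (mem_univ r) (fun v _ hv => ?_) f, card_univ, hcard]
    obtain ⟨u, hvu, hu⟩ := hG.connected.exists_adj_dist_lt hv
    exact ⟨u, mem_univ u, hvu, hu⟩
  obtain ⟨m, rfl⟩ : ∃ m, n = m + 1 := ⟨n - 1, by omega⟩
  refine ⟨?_, ?_⟩
  · rw [colB_eq_partitionSum, key, bell_eq_blockSum]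
  · rw [colT_eq_partitionSum, key, bell_eq_blockSum, blockSum]
    simp [add_comm]
end

section
/- Let C_n be the cycle graph of order n ≥ 3. Then B(C_n) = Σ_{j=1}^{n−1} (−1)^{j+1} B_{n−j} and T(C_n) = Σ_{j=1}^{n−1} (−1)^{j+1} B_{n−j+1}, where B_k is the k-th Bell number (the equalities hold as integers). -/
open Finset SimpleGraph

/-!
A partition of `Fin n` is encoded by the map `r` sending each element to the least element of its
block: a stable partition of `G` becomes a proper colouring `r` of `G`, and its blocks become the
colours used. Counting with a weight `w` of the number of blocks, one compares a graph on
`Fin (n + 1)` with its restriction to `Fin n`: the last vertex either opens a new block or joins one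
of the old blocks that contains none of its neighbours.

For the path this says that stable partitions of `P_{n+1}` with `k + 1` blocks correspond to
partitions of an `n`-set into `k` blocks, so `B(P_{n+1}) = B_n` and `T(P_{n+1}) = B_{n+1}`. A
stable partition of `P_{n+1}` either separates the two ends, and is then one of `C_{n+1}`, or puts
the last vertex into the block of `0`, which amounts to a stable partition of `C_n`. Hence
`B(C_{n+1}) + B(C_n) = B_n` and `T(C_{n+1}) + T(C_n) = B_{n+1}`, and since `C_2 = P_2` the
alternating sums follow by induction.
-/

open scoped Classical

namespace Finpartition

variable {α : Type*} [Fintype α] [DecidableEq α]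

theorem parts_eq_image_part (P : Finpartition (univ : Finset α)) :
    P.parts = univ.image P.part := by
  ext t
  simp only [mem_image, mem_univ, true_and]
  refine ⟨fun ht ↦ ?_, fun ⟨a, ha⟩ ↦ ha ▸ P.part_mem.2 (mem_univ a)⟩
  obtain ⟨a, ha⟩ := P.nonempty_of_mem_parts ht
  exact ⟨a, P.part_eq_of_mem ht ha⟩

theorem ext_part {P Q : Finpartition (univ : Finset α)} (h : ∀ a, P.part a = Q.part a) :
    P = Q := by
  ext1
  rw [parts_eq_image_part, parts_eq_image_part, funext h]

theorem part_eq_part_iff_mem (P : Finpartition (univ : Finset α)) {a b : α} :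
    P.part a = P.part b ↔ b ∈ P.part a := by
  rw [P.mem_part_iff_part_eq_part (mem_univ b) (mem_univ a), eq_comm]

theorem mem_part_ofSetoid_ker {β : Type*} (f : α → β) {a b : α} :
    b ∈ (ofSetoid (Setoid.ker f)).part a ↔ f a = f b :=
  mem_part_ofSetoid_iff_rel

end Finpartition

def leastReps (n : ℕ) : Finset (Fin n → ℕ) :=
  {r ∈ Fintype.piFinset fun i : Fin n ↦ range (i + 1) | ∀ i j : Fin n, r i = j → r j = j}

theorem mem_leastReps {n : ℕ} {r : Fin n → ℕ} :
    r ∈ leastReps n ↔ (∀ i, r i ≤ i) ∧ ∀ i j : Fin n, r i = j → r j = j := by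
  simp [leastReps]

def numBlocks {n : ℕ} (r : Fin n → ℕ) : ℕ := #(univ.image r)

namespace Finpartition

variable {n : ℕ} (P : Finpartition (univ : Finset (Fin n)))

noncomputable def partMin (i : Fin n) : Fin n :=
  (P.part i).min' (P.part_nonempty.2 (mem_univ i))

noncomputable def leastRep (i : Fin n) : ℕ := P.partMin i

theorem partMin_mem_part (i : Fin n) : P.partMin i ∈ P.part i := min'_mem _ _

theorem partMin_le (i : Fin n) : P.partMin i ≤ i := min'_le _ _ (P.mem_part (mem_univ i))

theorem part_partMin (i : Fin n) : P.part (P.partMin i) = P.part i :=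
  (P.part_eq_part_iff_mem.2 (P.partMin_mem_part i)).symm

theorem partMin_eq_partMin_iff {a b : Fin n} :
    P.partMin a = P.partMin b ↔ P.part a = P.part b := by
  refine ⟨fun h ↦ ?_, fun h ↦ by simp only [partMin, h]⟩
  rw [← P.part_partMin a, h, P.part_partMin]

theorem partMin_partMin (i : Fin n) : P.partMin (P.partMin i) = P.partMin i :=
  P.partMin_eq_partMin_iff.2 (P.part_partMin i)

theorem leastRep_mem_leastReps : P.leastRep ∈ leastReps n := by
  refine mem_leastReps.2 ⟨fun i ↦ P.partMin_le i, fun i j h ↦ ?_⟩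
  obtain rfl : P.partMin i = j := Fin.ext h
  exact congrArg Fin.val (P.partMin_partMin i)

theorem ofSetoid_ker_leastRep : ofSetoid (Setoid.ker P.leastRep) = P := by
  refine ext_part fun a ↦ Finset.ext fun b ↦ ?_
  rw [mem_part_ofSetoid_ker, leastRep, leastRep, Fin.val_inj, partMin_eq_partMin_iff,
    part_eq_part_iff_mem]

theorem card_parts_eq_numBlocks : #P.parts = numBlocks P.leastRep := by
  refine card_bij (fun t ht ↦ (t.min' (P.nonempty_of_mem_parts ht) : ℕ)) ?_ ?_ ?_
  · intro t ht
    obtain ⟨a, ha⟩ := P.nonempty_of_mem_parts ht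
    obtain rfl := P.part_eq_of_mem ht ha
    exact mem_image_of_mem _ (mem_univ a)
  · intro t₁ ht₁ t₂ ht₂ h
    exact P.eq_of_mem_parts ht₁ ht₂ (min'_mem _ _) (Fin.val_injective h.symm ▸ min'_mem _ _)
  · intro m hm
    obtain ⟨a, -, rfl⟩ := mem_image.1 hm
    exact ⟨P.part a, P.part_mem.2 (mem_univ a), rfl⟩

end Finpartition

theorem leastRep_ofSetoid_ker {n : ℕ} {r : Fin n → ℕ} (hr : r ∈ leastReps n) :
    (Finpartition.ofSetoid (Setoid.ker r)).leastRep = r := by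
  obtain ⟨hle, hfix⟩ := mem_leastReps.1 hr
  funext i
  have hmem : ⟨r i, (hle i).trans_lt i.2⟩ ∈ (Finpartition.ofSetoid (Setoid.ker r)).part i :=
    (Finpartition.mem_part_ofSetoid_ker r).2 (hfix i ⟨r i, _⟩ rfl).symm
  refine congrArg Fin.val (le_antisymm (min'_le _ _ hmem) (le_min' _ _ _ fun j hj ↦ ?_))
  rw [Finpartition.mem_part_ofSetoid_ker] at hj
  exact (Fin.mk_le_mk).2 (hj ▸ hle j)

def IsProperColoring {V β : Type*} (G : SimpleGraph V) (r : V → β) : Prop :=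
  ∀ ⦃u v⦄, G.Adj u v → r u ≠ r v

section Transfer

variable {n : ℕ} (G : SimpleGraph (Fin n))

theorem isStablePartition_iff_isProperColoring (P : Finpartition (univ : Finset (Fin n))) :
    IsStablePartition G P ↔ IsProperColoring G P.leastRep := by
  simp only [IsProperColoring, Finpartition.leastRep, ne_eq, Fin.val_inj,
    Finpartition.partMin_eq_partMin_iff]
  refine ⟨fun h u v huv hp ↦ ?_, fun h t ht u hu v hv huv ↦ ?_⟩
  · exact h _ (P.part_mem.2 (mem_univ u)) u (P.mem_part (mem_univ u)) v
      (P.part_eq_part_iff_mem.1 hp) huv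
  · exact h huv ((P.part_eq_of_mem ht hu).trans (P.part_eq_of_mem ht hv).symm)

noncomputable def colorSum (w : ℕ → ℕ) : ℕ :=
  ∑ r ∈ leastReps n with IsProperColoring G r, w (numBlocks r)

theorem sum_stablePartitions_eq_colorSum (w : ℕ → ℕ) :
    ∑ P ∈ univ.filter (IsStablePartition G), w #P.parts = colorSum G w := by
  refine sum_nbij' Finpartition.leastRep (fun r ↦ Finpartition.ofSetoid (Setoid.ker r))
    ?_ ?_ ?_ ?_ ?_
  · intro P hP
    rw [mem_filter] at hP ⊢
    exact ⟨P.leastRep_mem_leastReps, (isStablePartition_iff_isProperColoring G P).1 hP.2⟩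
  · intro r hr
    rw [mem_filter] at hr
    rw [mem_filter, isStablePartition_iff_isProperColoring, leastRep_ofSetoid_ker hr.1]
    exact ⟨mem_univ _, hr.2⟩
  · intro P _
    exact P.ofSetoid_ker_leastRep
  · intro r hr
    exact leastRep_ofSetoid_ker (mem_filter.1 hr).1
  · intro P _
    rw [P.card_parts_eq_numBlocks]

theorem colB_eq_colorSum : colB G = colorSum G 1 := by
  rw [colB, card_eq_sum_ones]
  exact sum_stablePartitions_eq_colorSum G 1

theorem colT_eq_colorSum : colT G = colorSum G id :=
  sum_stablePartitions_eq_colorSum G id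

end Transfer

section Snoc

variable {n : ℕ}

theorem image_snoc (r : Fin n → ℕ) (v : ℕ) :
    univ.image (Fin.snoc r v : Fin (n + 1) → ℕ) = insert v (univ.image r) := by
  ext m
  simp [Fin.exists_fin_succ', or_comm, eq_comm]

theorem lt_of_mem_image_of_mem_leastReps {r : Fin n → ℕ} (hr : r ∈ leastReps n) {v : ℕ}
    (hv : v ∈ univ.image r) : v < n := by
  obtain ⟨i, -, rfl⟩ := mem_image.1 hv
  exact ((mem_leastReps.1 hr).1 i).trans_lt i.2

theorem snoc_mem_leastReps_iff {r : Fin n → ℕ} {v : ℕ} :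
    (Fin.snoc r v : Fin (n + 1) → ℕ) ∈ leastReps (n + 1) ↔
      r ∈ leastReps n ∧ v ∈ insert n (univ.image r) := by
  simp only [mem_leastReps, Fin.forall_fin_succ', Fin.snoc_castSucc, Fin.snoc_last,
    Fin.val_castSucc, Fin.val_last]
  constructor
  · rintro ⟨⟨hle, hv⟩, hfix, hlast, -⟩
    refine ⟨⟨hle, fun i ↦ (hfix i).1⟩, ?_⟩
    rcases hv.eq_or_lt with rfl | hlt
    · exact mem_insert_self _ _
    · exact mem_insert_of_mem (mem_image.2 ⟨⟨v, hlt⟩, mem_univ _, hlast _ rfl⟩)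
  · rintro ⟨⟨hle, hfix⟩, hv⟩
    have hv' : v = n ∨ ∃ k, r k = v := by simpa using hv
    refine ⟨⟨hle, ?_⟩, fun i ↦ ⟨hfix i, fun h ↦ absurd h ((hle i).trans_lt i.2).ne⟩,
      fun i hi ↦ ?_, id⟩
    · rcases hv' with rfl | ⟨k, rfl⟩
      exacts [le_rfl, (hle k).trans k.2.le]
    · rcases hv' with rfl | ⟨k, rfl⟩
      exacts [absurd hi i.2.ne', hfix k i hi]

theorem sum_leastReps_succ {M : Type*} [AddCommMonoid M] (f : (Fin (n + 1) → ℕ) → M) :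
    ∑ r ∈ leastReps (n + 1), f r =
      ∑ r ∈ leastReps n, ∑ v ∈ insert n (univ.image r), f (Fin.snoc r v) := by
  rw [sum_sigma']
  refine sum_nbij' (fun r ↦ ⟨Fin.init r, r (Fin.last n)⟩) (fun p ↦ Fin.snoc p.1 p.2)
    ?_ ?_ ?_ ?_ ?_
  · intro r hr
    rw [← Fin.snoc_init_self r, snoc_mem_leastReps_iff] at hr
    simpa using hr
  · intro p hp
    rw [snoc_mem_leastReps_iff]
    simpa using hp
  · intro r _
    exact Fin.snoc_init_self r
  · intro p _
    simp
  · intro r _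
    simp

/-- The last element either opens a new block (`r (last n) = n`) or joins the block whose least
element is `v ∈ univ.image r`. -/
theorem sum_filter_leastReps_succ (p : (Fin (n + 1) → ℕ) → Prop) [DecidablePred p]
    (w : ℕ → ℕ) :
    ∑ r ∈ leastReps (n + 1) with p r, w (numBlocks r) =
      ∑ r ∈ leastReps n with p (Fin.snoc r n), w (numBlocks r + 1) +
        ∑ r ∈ leastReps n, #{v ∈ univ.image r | p (Fin.snoc r v)} * w (numBlocks r) := by
  rw [sum_filter, sum_leastReps_succ, sum_filter, ← sum_add_distrib]
  refine sum_congr rfl fun r hr ↦ ?_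
  have hn : n ∉ univ.image r := fun h ↦ (lt_of_mem_image_of_mem_leastReps hr h).false
  simp only [numBlocks, image_snoc]
  rw [sum_insert hn, card_insert_of_notMem hn, ← sum_filter, ← smul_eq_mul, ← sum_const]
  congr 1
  exact sum_congr rfl fun v hv ↦ by rw [insert_eq_of_mem (mem_filter.1 hv).1]

end Snoc

section Bot

variable {n : ℕ}

@[simp]
theorem isProperColoring_bot {V β : Type*} (r : V → β) : IsProperColoring ⊥ r :=
  fun _ _ h ↦ h.elim

theorem bell_eq_colorSum_bot (n : ℕ) : bell n = colorSum (⊥ : SimpleGraph (Fin n)) 1 := by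
  rw [← colB_eq_colorSum, colB, bell, ← card_univ]
  congr 1
  exact (filter_true_of_mem fun P _ t _ u _ v _ h ↦ h).symm

theorem colorSum_bot_zero (w : ℕ → ℕ) : colorSum (⊥ : SimpleGraph (Fin 0)) w = w 0 := by
  simp [colorSum, leastReps, numBlocks]

theorem colorSum_bot_succ (w : ℕ → ℕ) :
    colorSum (⊥ : SimpleGraph (Fin (n + 1))) w =
      colorSum (⊥ : SimpleGraph (Fin n)) fun k ↦ w (k + 1) + k * w k := by
  rw [colorSum, colorSum, sum_filter_leastReps_succ]
  simp only [isProperColoring_bot, filter_true, sum_add_distrib, numBlocks]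

end Bot

section Path

variable {n : ℕ}

theorem isProperColoring_pathGraph_iff {m : ℕ} {r : Fin m → ℕ} :
    IsProperColoring (pathGraph m) r ↔ ∀ i j : Fin m, i.val + 1 = j → r i ≠ r j := by
  refine ⟨fun h i j hij ↦ h (pathGraph_adj.2 (Or.inl hij)), fun h u v huv ↦ ?_⟩
  rcases pathGraph_adj.1 huv with huv | huv
  exacts [h u v huv, (h v u huv).symm]

theorem isProperColoring_pathGraph_snoc_iff {r : Fin (n + 1) → ℕ} {v : ℕ} :
    IsProperColoring (pathGraph (n + 2)) (Fin.snoc r v : Fin (n + 2) → ℕ) ↔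
      IsProperColoring (pathGraph (n + 1)) r ∧ r (Fin.last n) ≠ v := by
  simp only [isProperColoring_pathGraph_iff]
  constructor
  · intro h
    refine ⟨fun i j hij ↦ ?_, ?_⟩
    · simpa using h i.castSucc j.castSucc (by simpa using hij)
    · simpa using h (Fin.last n).castSucc (Fin.last (n + 1)) (by simp)
  · rintro ⟨h, hv⟩ i j hij
    induction j using Fin.lastCases with
    | last =>
      obtain rfl : i = (Fin.last n).castSucc := Fin.ext (by simp at hij ⊢; omega)
      simpa using hv
    | cast j =>
      induction i using Fin.lastCases with
      | last => simp at hij; omega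
      | cast i => simpa using h i j (by simpa using hij)

theorem colorSum_pathGraph_succ_succ (w : ℕ → ℕ) :
    colorSum (pathGraph (n + 2)) w =
      colorSum (pathGraph (n + 1)) fun k ↦ w (k + 1) + (k - 1) * w k := by
  rw [colorSum, sum_filter_leastReps_succ, colorSum, sum_add_distrib]
  simp only [isProperColoring_pathGraph_snoc_iff]
  congr 1
  · refine sum_congr (filter_congr fun r hr ↦ and_iff_left ?_) fun _ _ ↦ rfl
    exact (((mem_leastReps.1 hr).1 _).trans_lt (Nat.lt_succ_self n)).ne
  · rw [sum_filter]
    refine sum_congr rfl fun r _ ↦ ?_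
    split_ifs with hr
    · have hlast : r (Fin.last n) ∈ univ.image r := mem_image_of_mem r (mem_univ _)
      rw [numBlocks, ← card_erase_of_mem hlast, filter_and, filter_true_of_mem fun _ _ ↦ hr,
        filter_ne, inter_eq_right.2 (erase_subset _ _)]
    · simp [hr]

theorem colorSum_pathGraph_succ (n : ℕ) (w : ℕ → ℕ) :
    colorSum (pathGraph (n + 1)) w = colorSum (⊥ : SimpleGraph (Fin n)) fun k ↦ w (k + 1) := by
  induction n generalizing w with
  | zero =>
    rw [Subsingleton.elim (pathGraph 1) ⊥, colorSum_bot_succ, colorSum_bot_zero,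
      colorSum_bot_zero]
    simp
  | succ n ih =>
    rw [colorSum_pathGraph_succ_succ, ih, colorSum_bot_succ]
    simp

end Path

section Cycle

variable {n : ℕ}

theorem cycleGraph_adj_iff {u v : Fin (n + 2)} :
    (cycleGraph (n + 2)).Adj u v ↔ (pathGraph (n + 2)).Adj u v ∨
      (u = 0 ∧ v = Fin.last (n + 1)) ∨ (u = Fin.last (n + 1) ∧ v = 0) := by
  rw [cycleGraph_adj', pathGraph_adj]
  simp only [Fin.ext_iff, Fin.val_zero, Fin.val_last]
  have hu := u.2
  have hv := v.2
  rcases lt_trichotomy u v with h | rfl | h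
  · rw [Fin.coe_sub_iff_lt.2 h, Fin.coe_sub_iff_le.2 h.le]
    rw [Fin.lt_def] at h
    omega
  · simp only [sub_self, Fin.val_zero]
    omega
  · rw [Fin.coe_sub_iff_lt.2 h, Fin.coe_sub_iff_le.2 h.le]
    rw [Fin.lt_def] at h
    omega

theorem isProperColoring_cycleGraph_iff {r : Fin (n + 2) → ℕ} :
    IsProperColoring (cycleGraph (n + 2)) r ↔
      IsProperColoring (pathGraph (n + 2)) r ∧ r (Fin.last (n + 1)) ≠ r 0 := by
  refine ⟨fun h ↦ ⟨fun u v huv ↦ h (pathGraph_le_cycleGraph huv),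
    h (cycleGraph_adj_iff.2 (Or.inr (Or.inr ⟨rfl, rfl⟩)))⟩, fun ⟨h, hr⟩ u v huv ↦ ?_⟩
  rcases cycleGraph_adj_iff.1 huv with huv | ⟨rfl, rfl⟩ | ⟨rfl, rfl⟩
  exacts [h huv, hr.symm, hr]

theorem apply_zero_of_mem_leastReps {r : Fin (n + 1) → ℕ} (hr : r ∈ leastReps (n + 1)) :
    r 0 = 0 :=
  Nat.le_zero.1 ((mem_leastReps.1 hr).1 0)

theorem colorSum_pathGraph_eq_add (w : ℕ → ℕ) :
    colorSum (pathGraph (n + 3)) w =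
      colorSum (cycleGraph (n + 3)) w + colorSum (cycleGraph (n + 2)) w := by
  rw [colorSum, ← sum_filter_not_add_sum_filter _ (fun r ↦ r (Fin.last (n + 2)) = 0),
    filter_filter, filter_filter, colorSum]
  congr 1
  · refine sum_congr (filter_congr fun r hr ↦ ?_) fun _ _ ↦ rfl
    rw [isProperColoring_cycleGraph_iff, apply_zero_of_mem_leastReps hr]
  · -- Putting the last vertex into the block of `0` contracts the edge between them.
    refine (sum_filter_leastReps_succ (n := n + 2) _ w).trans ?_
    simp only [isProperColoring_pathGraph_snoc_iff, Fin.snoc_last, add_eq_zero,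
      OfNat.ofNat_ne_zero, and_false, filter_false, sum_empty, zero_add]
    rw [colorSum, sum_filter]
    refine sum_congr rfl fun r hr ↦ ?_
    have h0 : 0 ∈ univ.image r := mem_image.2 ⟨0, mem_univ _, apply_zero_of_mem_leastReps hr⟩
    rw [isProperColoring_cycleGraph_iff, apply_zero_of_mem_leastReps hr]
    split_ifs with h
    · rw [card_eq_one.2 ⟨0, ?_⟩, one_mul]
      ext x
      simp only [mem_filter, mem_singleton]
      exact ⟨fun hx ↦ hx.2.2, by rintro rfl; exact ⟨h0, h, rfl⟩⟩
    · rw [filter_false_of_mem, card_empty, zero_mul]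
      rintro x - ⟨hx, rfl⟩
      exact h hx

end Cycle

theorem sum_Icc_one_succ {M : Type*} [AddCommMonoid M] (f : ℕ → M) (k : ℕ) :
    ∑ j ∈ Icc 1 (k + 1), f j = f 1 + ∑ j ∈ Icc 1 k, f (j + 1) := by
  rw [← Ico_add_one_right_eq_Icc, ← Ico_add_one_right_eq_Icc, sum_Ico_eq_sum_range,
    sum_Ico_eq_sum_range, add_tsub_cancel_right, add_tsub_cancel_right, sum_range_succ', add_comm]
  simp [add_comm, add_left_comm]

theorem eq_sum_alternating_of_add_eq {a c : ℕ → ℤ} (h₂ : a 2 = c 1)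
    (h : ∀ m ≥ 2, a (m + 1) + a m = c m) {m : ℕ} (hm : 2 ≤ m) :
    a m = ∑ j ∈ Icc 1 (m - 1), (-1) ^ (j + 1) * c (m - j) := by
  induction m, hm using Nat.le_induction with
  | base => simp [h₂]
  | succ m hm ih =>
    obtain ⟨k, rfl⟩ : ∃ k, m = k + 1 := ⟨m - 1, by omega⟩
    rw [eq_sub_of_add_eq (h _ hm), ih, add_tsub_cancel_right, add_tsub_cancel_right,
      sum_Icc_one_succ]
    simp [pow_succ, sum_neg_distrib, sub_eq_add_neg]

theorem colorSum_cycleGraph_eq (w : ℕ → ℕ) {m : ℕ} (hm : 2 ≤ m) :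
    (colorSum (cycleGraph m) w : ℤ) =
      ∑ j ∈ Icc 1 (m - 1), (-1 : ℤ) ^ (j + 1) *
        (colorSum (⊥ : SimpleGraph (Fin (m - j))) fun k ↦ w (k + 1) : ℕ) := by
  refine eq_sum_alternating_of_add_eq (a := fun m ↦ colorSum (cycleGraph m) w)
    (c := fun m ↦ colorSum (⊥ : SimpleGraph (Fin m)) fun k ↦ w (k + 1)) ?_ (fun m _ ↦ ?_) hm
  · simp only [cycleGraph_two_eq_top, ← pathGraph_two_eq_top, colorSum_pathGraph_succ]
  · obtain ⟨n, rfl⟩ : ∃ n, m = n + 2 := ⟨m - 2, by omega⟩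
    rw [← Nat.cast_add, ← colorSum_pathGraph_eq_add, colorSum_pathGraph_succ]

/-- For the cycle `C_n` with `n ≥ 3`,
`B(C_n) = ∑_{j=1}^{n-1} (-1)^{j+1} bell (n-j)` and
`T(C_n) = ∑_{j=1}^{n-1} (-1)^{j+1} bell (n-j+1)`. -/
theorem stmt_3 (n : ℕ) (hn : 3 ≤ n) :
    (colB (cycleGraph n) : ℤ) =
      ∑ j ∈ Finset.Icc 1 (n - 1), (-1 : ℤ) ^ (j + 1) * bell (n - j) ∧
    (colT (cycleGraph n) : ℤ) =
      ∑ j ∈ Finset.Icc 1 (n - 1), (-1 : ℤ) ^ (j + 1) * bell (n - j + 1) := by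
  refine ⟨?_, ?_⟩
  · rw [colB_eq_colorSum, colorSum_cycleGraph_eq 1 (by omega)]
    simp only [bell_eq_colorSum_bot]
    rfl
  · rw [colT_eq_colorSum, colorSum_cycleGraph_eq id (by omega)]
    refine sum_congr rfl fun j _ ↦ ?_
    rw [bell_eq_colorSum_bot, colorSum_bot_succ]
    simp [add_comm]
end

section
/- Let G be a finite simple graph with a simplicial vertex v (a vertex whose neighbors are pairwise adjacent), and let G − v be the graph obtained from G by deleting v and all its incident edges. Then A(G) > A(G − v). -/
open Finset SimpleGraph

/-!
Every stable partition of `G` arises exactly once from a stable partition `Q` of `G - v` by putting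
`v` into a new block or into one of the blocks of `Q` that contain no neighbour of `v`. Since the
neighbours of `v` form a clique, they lie in distinct blocks of `Q`, so there are `f Q = b Q - deg v`
such blocks, where `b Q` is the number of blocks of `Q`. Hence `B(G) = ∑ (f Q + 1)` and
`T(G) = ∑ ((f Q + 1) b Q + 1)`: up to the positive term `B(G - v) / B(G)`, `A(G)` is the mean of `b`
with weights `f + 1`, which increase with `b`, so by Chebyshev's sum inequality it is at least the
unweighted mean `A(G - v)`.
-/

section Chebyshev

variable {ι K : Type*} [Field K] [LinearOrder K] [IsStrictOrderedRing K]

theorem sum_div_card_lt_sum_mul_add_one_div_sum {s : Finset ι} (hs : s.Nonempty)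
    {w b : ι → K} (hw : ∀ i ∈ s, 0 < w i) (hwb : MonovaryOn w b s) :
    (∑ i ∈ s, b i) / #s < (∑ i ∈ s, (w i * b i + 1)) / ∑ i ∈ s, w i := by
  have hcard : (0 : K) < #s := by exact_mod_cast hs.card_pos
  rw [div_lt_div_iff₀ hcard (sum_pos hw hs), sum_add_distrib, sum_const, nsmul_one]
  nlinarith [hwb.sum_mul_sum_le_card_mul_sum]

end Chebyshev

theorem Finpartition.eq_of_parts_subset {α : Type*} [DecidableEq α] {s : Finset α}
    {P P' : Finpartition s} (h : P.parts ⊆ P'.parts) : P = P' := by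
  refine Finpartition.ext (Subset.antisymm h fun t ht => ?_)
  obtain ⟨a, hat⟩ := P'.nonempty_of_mem_parts ht
  obtain ⟨t', ht', hat'⟩ := P.exists_mem (P'.subset ht hat)
  rwa [← P'.eq_of_mem_parts (h ht') ht hat' hat]

theorem Finpartition.disjoint_of_mem_erase {α : Type*} [DecidableEq α] {s : Finset α}
    (P : Finpartition s) {t u : Finset α} (ht : t = ∅ ∨ t ∈ P.parts) (hu : u ∈ P.parts.erase t) :
    Disjoint t u := by
  rcases ht with rfl | ht
  · exact disjoint_empty_left u
  · exact P.disjoint ht (mem_of_mem_erase hu) (ne_of_mem_erase hu).symm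

section StablePartition

variable {W : Type*} [Fintype W] [DecidableEq W]

open scoped Classical in
noncomputable def stablePartitions (H : SimpleGraph W) : Finset (Finpartition (univ : Finset W)) :=
  {P | IsStablePartition H P}

variable {H : SimpleGraph W}

theorem mem_stablePartitions {P : Finpartition (univ : Finset W)} :
    P ∈ stablePartitions H ↔ IsStablePartition H P := by
  simp [stablePartitions]

theorem isStablePartition_bot_s5 (H : SimpleGraph W) : IsStablePartition H ⊥ := by
  intro t ht u hu w hw
  obtain ⟨a, -, rfl⟩ := Finpartition.mem_bot_iff.1 ht
  rw [mem_singleton] at hu hw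
  rw [hu, hw]
  exact H.loopless.irrefl a

theorem IsStablePartition.card_filter_not_disjoint_of_isClique
    {Q : Finpartition (univ : Finset W)} (hQ : IsStablePartition H Q) {K : Finset W}
    (hK : H.IsClique (K : Set W)) : #{t ∈ Q.parts | ¬Disjoint t K} = #K := by
  symm
  refine card_bij (fun u _ => Q.part u) (fun u hu => ?_) (fun u₁ hu₁ u₂ hu₂ h => ?_)
    (fun t ht => ?_)
  · exact mem_filter.2 ⟨Q.part_mem.2 (mem_univ u),
      not_disjoint_iff.2 ⟨u, Q.mem_part (mem_univ u), hu⟩⟩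
  · by_contra hne
    have h₂ : u₂ ∈ Q.part u₁ := h ▸ Q.mem_part (mem_univ u₂)
    exact hQ _ (Q.part_mem.2 (mem_univ u₁)) u₁ (Q.mem_part (mem_univ u₁)) u₂ h₂
      (hK hu₁ hu₂ hne)
  · obtain ⟨htQ, hKt⟩ := mem_filter.1 ht
    obtain ⟨u, hut, huK⟩ := not_disjoint_iff.1 hKt
    exact ⟨u, huK, Q.part_eq_of_mem htQ hut⟩

end StablePartition

namespace VertexDeletion

variable {V : Type*} {G : SimpleGraph V} (v : V)

local notation "V₋" => Set.Elem (Set.ofPred fun w : V => w ≠ v)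

def lift : Finset V₋ ↪ Finset V :=
  (mapEmbedding (Function.Embedding.subtype _)).toEmbedding

variable {v}

theorem mem_lift {s : Finset V₋} {a : V} : a ∈ lift v s ↔ ∃ u ∈ s, (u : V) = a := by
  simp [lift]

@[simp]
theorem coe_mem_lift {s : Finset V₋} {u : V₋} : (u : V) ∈ lift v s ↔ u ∈ s :=
  mem_map' _

theorem disjoint_lift {s t : Finset V₋} : Disjoint (lift v s) (lift v t) ↔ Disjoint s t :=
  disjoint_map _

theorem notMem_lift (s : Finset V₋) : v ∉ lift v s := by
  simp [mem_lift]

section DecidableEq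

variable [DecidableEq V]

variable (v) in
def restrict (t : Finset V) : Finset V₋ :=
  t.subtype _

@[simp]
theorem mem_restrict {t : Finset V} {u : V₋} : u ∈ restrict v t ↔ (u : V) ∈ t :=
  mem_subtype

theorem restrict_lift (s : Finset V₋) : restrict v (lift v s) = s := by
  ext u
  simp

theorem restrict_insert_lift (s : Finset V₋) : restrict v (insert v (lift v s)) = s := by
  ext u
  have hu : (u : V) ≠ v := u.2
  simp [hu]

theorem lift_restrict (t : Finset V) : lift v (restrict v t) = t.erase v := by
  ext a
  simp [mem_lift, and_comm]

section Partition

variable [Fintype V]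

variable (v) in
/-- Puts `v` into the block `s` of `Q`; `s = ∅` stands for a new block `{v}`, and an `s` that is
neither gives a junk value. -/
noncomputable def addVertex (Q : Finpartition (univ : Finset V₋)) (s : Finset V₋) :
    Finpartition (univ : Finset V) :=
  if hs : s = ∅ ∨ s ∈ Q.parts then
    { parts := insert (insert v (lift v s)) ((Q.parts.erase s).map (lift v))
      supIndep := by
        rw [supIndep_iff_pairwiseDisjoint, coe_insert, Set.pairwiseDisjoint_insert, coe_map]
        refine ⟨?_, ?_⟩
        · rintro _ ⟨t₁, ht₁, rfl⟩ _ ⟨t₂, ht₂, rfl⟩ hne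
          exact disjoint_lift.2 (Q.disjoint (mem_of_mem_erase ht₁) (mem_of_mem_erase ht₂)
            fun h => hne (h ▸ rfl))
        · rintro _ ⟨t, ht, rfl⟩ -
          exact disjoint_insert_left.2
            ⟨notMem_lift t, disjoint_lift.2 (Q.disjoint_of_mem_erase hs ht)⟩
      sup_parts := by
        refine eq_univ_iff_forall.2 fun a => mem_sup.2 ?_
        by_cases hav : a = v
        · exact ⟨_, mem_insert_self _ _, by rw [hav]; exact mem_insert_self _ _⟩
        set u : V₋ := ⟨a, hav⟩
        by_cases hus : u ∈ s
        · exact ⟨_, mem_insert_self _ _, mem_insert_of_mem (coe_mem_lift.2 hus)⟩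
        obtain ⟨t, ht, hut⟩ := Q.exists_mem (mem_univ u)
        have hts : t ≠ s := fun h => hus (h ▸ hut)
        exact ⟨lift v t, mem_insert_of_mem (mem_map_of_mem _ (mem_erase.2 ⟨hts, ht⟩)),
          coe_mem_lift.2 hut⟩
      bot_notMem := by
        simp only [bot_eq_empty, mem_insert, mem_map, mem_erase]
        rintro (h | ⟨t, ⟨-, ht⟩, h⟩)
        · exact insert_ne_empty _ _ h.symm
        · exact Q.ne_empty ht (map_eq_empty.1 h) }
  else ⊥

theorem parts_addVertex {Q : Finpartition (univ : Finset V₋)} {s : Finset V₋}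
    (hs : s = ∅ ∨ s ∈ Q.parts) :
    (addVertex v Q s).parts = insert (insert v (lift v s)) ((Q.parts.erase s).map (lift v)) := by
  rw [addVertex, dif_pos hs]

theorem card_parts_addVertex {Q : Finpartition (univ : Finset V₋)} {s : Finset V₋}
    (hs : s = ∅ ∨ s ∈ Q.parts) :
    #(addVertex v Q s).parts = #Q.parts + if s = ∅ then 1 else 0 := by
  have hnew : insert v (lift v s) ∉ (Q.parts.erase s).map (lift v) := by
    rw [mem_map]
    rintro ⟨t, -, ht⟩
    exact notMem_lift t (ht ▸ mem_insert_self _ _)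
  rw [parts_addVertex hs, card_insert_of_notMem hnew, card_map]
  rcases hs with rfl | hs
  · rw [erase_eq_of_notMem Q.empty_notMem_parts, if_pos rfl]
  · rw [card_erase_of_mem hs, if_neg (Q.ne_empty hs)]
    have := card_pos.2 ⟨s, hs⟩
    omega

theorem part_addVertex {Q : Finpartition (univ : Finset V₋)} {s : Finset V₋}
    (hs : s = ∅ ∨ s ∈ Q.parts) : (addVertex v Q s).part v = insert v (lift v s) :=
  Finpartition.part_eq_of_mem _ (parts_addVertex hs ▸ mem_insert_self _ _) (mem_insert_self _ _)

variable (v) in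
noncomputable def deleteVertex (P : Finpartition (univ : Finset V)) :
    Finpartition (univ : Finset V₋) :=
  Finpartition.ofErase (P.parts.image (restrict v))
    (by
      rw [supIndep_iff_pairwiseDisjoint, coe_image]
      rintro _ ⟨t₁, ht₁, rfl⟩ _ ⟨t₂, ht₂, rfl⟩ hne
      refine disjoint_left.2 fun u hu₁ hu₂ => ?_
      exact disjoint_left.1 (P.disjoint ht₁ ht₂ fun h => hne (h ▸ rfl))
        (mem_restrict.1 hu₁) (mem_restrict.1 hu₂))
    (by
      refine eq_univ_iff_forall.2 fun u => mem_sup.2 ?_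
      obtain ⟨t, ht, hut⟩ := P.exists_mem (mem_univ (u : V))
      exact ⟨restrict v t, mem_image_of_mem _ ht, mem_restrict.2 hut⟩)

theorem parts_deleteVertex (P : Finpartition (univ : Finset V)) :
    (deleteVertex v P).parts = (P.parts.image (restrict v)).erase ∅ :=
  rfl

theorem restrict_part_mem_or (P : Finpartition (univ : Finset V)) :
    restrict v (P.part v) = ∅ ∨ restrict v (P.part v) ∈ (deleteVertex v P).parts := by
  refine or_iff_not_imp_left.2 fun hne => ?_
  exact mem_erase.2 ⟨hne, mem_image_of_mem _ (P.part_mem.2 (mem_univ v))⟩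

theorem deleteVertex_addVertex {Q : Finpartition (univ : Finset V₋)} {s : Finset V₋}
    (hs : s = ∅ ∨ s ∈ Q.parts) : deleteVertex v (addVertex v Q s) = Q := by
  have hrl : restrict v ∘ lift v = id := funext restrict_lift
  ext1
  rw [parts_deleteVertex, parts_addVertex hs, image_insert, restrict_insert_lift,
    map_eq_image, image_image, hrl, image_id]
  rcases hs with rfl | hs
  · rw [erase_insert_eq_erase, erase_idem, erase_eq_of_notMem Q.empty_notMem_parts]
  · rw [insert_erase hs, erase_eq_of_notMem Q.empty_notMem_parts]

theorem addVertex_deleteVertex (P : Finpartition (univ : Finset V)) :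
    addVertex v (deleteVertex v P) (restrict v (P.part v)) = P := by
  refine Finpartition.eq_of_parts_subset fun t ht => ?_
  rw [parts_addVertex (restrict_part_mem_or P), lift_restrict,
    insert_erase (P.mem_part (mem_univ v))] at ht
  rcases mem_insert.1 ht with rfl | ht
  · exact P.part_mem.2 (mem_univ v)
  obtain ⟨t', ht', rfl⟩ := mem_map.1 ht
  obtain ⟨hne, ht'⟩ := mem_erase.1 ht'
  obtain ⟨t₀, ht₀, rfl⟩ := mem_image.1 (mem_of_mem_erase ht')
  have hvt₀ : v ∉ t₀ := fun hv => hne (by rw [P.part_eq_of_mem ht₀ hv])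
  rwa [lift_restrict, erase_eq_of_notMem hvt₀]

theorem _root_.IsStablePartition.addVertex {Q : Finpartition (univ : Finset V₋)}
    (hQ : IsStablePartition (G.induce {w | w ≠ v}) Q) {s : Finset V₋}
    (hs : s = ∅ ∨ s ∈ Q.parts) (hsv : ∀ u ∈ s, ¬G.Adj v u) :
    IsStablePartition G (addVertex v Q s) := by
  have hmem {a : V} : a ∈ insert v (lift v s) ↔ a = v ∨ ∃ u ∈ s, (u : V) = a := by
    rw [mem_insert, mem_lift]
  intro t ht a ha b hb hab
  rcases mem_insert.1 (parts_addVertex hs ▸ ht) with rfl | ht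
  · rcases hmem.1 ha with rfl | ⟨u₁, hu₁, rfl⟩ <;> rcases hmem.1 hb with rfl | ⟨u₂, hu₂, rfl⟩
    · exact hab.ne rfl
    · exact hsv u₂ hu₂ hab
    · exact hsv u₁ hu₁ hab.symm
    · have hs : s ∈ Q.parts := hs.resolve_left (ne_empty_of_mem hu₁)
      exact hQ s hs u₁ hu₁ u₂ hu₂ hab
  · obtain ⟨t', ht', rfl⟩ := mem_map.1 ht
    obtain ⟨u₁, hu₁, rfl⟩ := mem_lift.1 ha
    obtain ⟨u₂, hu₂, rfl⟩ := mem_lift.1 hb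
    exact hQ t' (mem_of_mem_erase ht') u₁ hu₁ u₂ hu₂ hab

theorem _root_.IsStablePartition.deleteVertex {P : Finpartition (univ : Finset V)}
    (hP : IsStablePartition G P) :
    IsStablePartition (G.induce {w | w ≠ v}) (deleteVertex v P) := by
  intro t ht u hu w hw
  obtain ⟨t₀, ht₀, rfl⟩ := mem_image.1 (mem_of_mem_erase ht)
  exact hP t₀ ht₀ u (mem_restrict.1 hu) w (mem_restrict.1 hw)

open scoped Classical in
variable (G v) in
noncomputable def deletedNeighborFinset : Finset V₋ :=
  {u | G.Adj v u}

theorem isClique_deletedNeighborFinset (hv : G.IsClique (G.neighborSet v)) :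
    (G.induce {w | w ≠ v}).IsClique (deletedNeighborFinset G v : Set V₋) := by
  intro u hu w hw huw
  simp only [deletedNeighborFinset, coe_filter, mem_univ, true_and] at hu hw
  exact hv hu hw (Subtype.coe_injective.ne huw)

variable (G v) in
noncomputable def freeParts (Q : Finpartition (univ : Finset V₋)) : Finset (Finset V₋) :=
  {t ∈ Q.parts | Disjoint t (deletedNeighborFinset G v)}

variable (G v) in
/-- As in `addVertex`, `∅` stands for a new block `{v}`. -/
noncomputable def insertionSlots (Q : Finpartition (univ : Finset V₋)) : Finset (Finset V₋) :=
  insert ∅ (freeParts G v Q)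

theorem empty_notMem_freeParts (Q : Finpartition (univ : Finset V₋)) :
    ∅ ∉ freeParts G v Q :=
  fun h => Q.empty_notMem_parts (mem_filter.1 h).1

theorem mem_insertionSlots {Q : Finpartition (univ : Finset V₋)} {s : Finset V₋} :
    s ∈ insertionSlots G v Q ↔ (s = ∅ ∨ s ∈ Q.parts) ∧ Disjoint s (deletedNeighborFinset G v) := by
  rw [insertionSlots, mem_insert, freeParts, mem_filter]
  rcases eq_or_ne s ∅ with rfl | hs
  · simp
  · simp [hs]

theorem card_freeParts_add_card_deletedNeighborFinset {Q : Finpartition (univ : Finset V₋)}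
    (hQ : IsStablePartition (G.induce {w | w ≠ v}) Q) (hv : G.IsClique (G.neighborSet v)) :
    #(freeParts G v Q) + #(deletedNeighborFinset G v) = #Q.parts := by
  rw [← hQ.card_filter_not_disjoint_of_isClique (isClique_deletedNeighborFinset hv)]
  exact card_filter_add_card_filter_not _

variable (G v) in
theorem sum_stablePartitions_eq_sum_sigma {M : Type*} [AddCommMonoid M]
    (g : Finpartition (univ : Finset V) → M) :
    ∑ P ∈ stablePartitions G, g P =
      ∑ x ∈ (stablePartitions (G.induce {w | w ≠ v})).sigma (insertionSlots G v),
        g (addVertex v x.1 x.2) := by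
  symm
  refine sum_nbij' (fun x => addVertex v x.1 x.2)
    (fun P => ⟨deleteVertex v P, restrict v (P.part v)⟩) ?_ ?_ ?_ ?_ fun _ _ => rfl
  · rintro ⟨Q, s⟩ hx
    obtain ⟨hQ, hs⟩ := mem_sigma.1 hx
    obtain ⟨hs, hsK⟩ := mem_insertionSlots.1 hs
    refine mem_stablePartitions.2 ((mem_stablePartitions.1 hQ).addVertex hs fun u hu => ?_)
    simpa [deletedNeighborFinset] using disjoint_left.1 hsK hu
  · intro P hP
    have hP := mem_stablePartitions.1 hP
    refine mem_sigma.2 ⟨mem_stablePartitions.2 hP.deleteVertex,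
      mem_insertionSlots.2 ⟨restrict_part_mem_or P, disjoint_left.2 fun u hu huK => ?_⟩⟩
    simp only [deletedNeighborFinset, mem_filter, mem_univ, true_and] at huK
    exact hP _ (P.part_mem.2 (mem_univ v)) v (P.mem_part (mem_univ v)) u (mem_restrict.1 hu) huK
  · rintro ⟨Q, s⟩ hx
    have hs := (mem_insertionSlots.1 (mem_sigma.1 hx).2).1
    exact Sigma.ext (deleteVertex_addVertex hs)
      (heq_of_eq (by rw [part_addVertex hs, restrict_insert_lift]))
  · intro P _
    exact addVertex_deleteVertex P

theorem card_insertionSlots (Q : Finpartition (univ : Finset V₋)) :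
    #(insertionSlots G v Q) = #(freeParts G v Q) + 1 :=
  card_insert_of_notMem (empty_notMem_freeParts Q)

variable (G v)

theorem colB_eq_sum :
    colB G = ∑ Q ∈ stablePartitions (G.induce {w | w ≠ v}), (#(freeParts G v Q) + 1) := by
  change #(stablePartitions G) = _
  rw [card_eq_sum_ones, sum_stablePartitions_eq_sum_sigma G v, sum_sigma]
  simp_rw [← card_eq_sum_ones, card_insertionSlots]

theorem colT_eq_sum :
    colT G = ∑ Q ∈ stablePartitions (G.induce {w | w ≠ v}),
      ((#(freeParts G v Q) + 1) * #Q.parts + 1) := by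
  change ∑ P ∈ stablePartitions G, #P.parts = _
  rw [sum_stablePartitions_eq_sum_sigma G v, sum_sigma]
  refine sum_congr rfl fun Q _ => ?_
  have hfree : ∀ s ∈ freeParts G v Q, #(addVertex v Q s).parts = #Q.parts := fun s hs => by
    rw [card_parts_addVertex (Or.inr (mem_filter.1 hs).1),
      if_neg fun h => empty_notMem_freeParts Q (h ▸ hs), add_zero]
  rw [insertionSlots, sum_insert (empty_notMem_freeParts Q), card_parts_addVertex (Or.inl rfl),
    if_pos rfl, sum_congr rfl hfree, sum_const, smul_eq_mul]
  ring

end Partition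

end DecidableEq

end VertexDeletion

open VertexDeletion

/-- If `v` is a simplicial vertex of `G` (its neighbors are pairwise adjacent), then
`A(G) > A(G - v)`. -/
theorem stmt_5 {V : Type*} [Fintype V] [DecidableEq V] (G : SimpleGraph V) (v : V)
    (hsimp : ∀ u w, u ≠ w → G.Adj v u → G.Adj v w → G.Adj u w) :
    colA G > colA (G.induce {w | w ≠ v}) := by
  have hv : G.IsClique (G.neighborSet v) := fun u hu w hw huw => hsimp u w huw hu hw
  set S := stablePartitions (G.induce {w | w ≠ v})
  have hS : S.Nonempty := ⟨⊥, mem_stablePartitions.2 (isStablePartition_bot_s5 _)⟩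
  have hB : colB (G.induce {w | w ≠ v}) = #S := rfl
  have hT : colT (G.induce {w | w ≠ v}) = ∑ Q ∈ S, #Q.parts := rfl
  rw [gt_iff_lt, colA, colA, hB, hT, colB_eq_sum G v, colT_eq_sum G v]
  push_cast
  refine sum_div_card_lt_sum_mul_add_one_div_sum hS (fun Q _ => by positivity)
    fun Q hQ R hR hlt => ?_
  have hQ := card_freeParts_add_card_deletedNeighborFinset (mem_stablePartitions.1 hQ) hv
  have hR := card_freeParts_add_card_deletedNeighborFinset (mem_stablePartitions.1 hR) hv
  norm_cast at hlt ⊢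
  omega
end

section
/- For all integers n ≥ 1 and p ≥ 0, (Σ_{i=0}^{p+1} C(p+1,i) B_{n+i}) · (Σ_{i=0}^{p} C(p,i) B_{n+i}) < (Σ_{i=0}^{p+1} C(p+1,i) B_{n+i−1}) · (Σ_{i=0}^{p} C(p,i) B_{n+i+1}), where C(m,i) is the binomial coefficient and B_k is the k-th Bell number. -/
/-!
Write `S_p(m) = ∑ᵢ C(p,i) B_{m+i}` (`binomSum`). By Pascal's rule
`S_{p+1}(m) = S_p(m) + S_p(m+1)`, so with `a, b, c = S_p(n-1), S_p(n), S_p(n+1)` the inequality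
reads `(b + c) b < (a + b) c`, i.e. `b² < a c`: the sequence `S_p` is strictly log-convex.
Strict log-convexity survives sums, because `2 b b' ≤ a c' + a' c` whenever `b² ≤ a c` and
`b'² ≤ a' c'` (AM-GM), so by Pascal's rule it passes from the Bell numbers to every `S_p`.
Log-convexity of the Bell numbers comes from the same mechanism: the recurrence
`B_{M+1} = S_M(0)` gives `B_{M+1}, B_{M+2}, B_{M+3} = a, a + b, a + 2b + c` for
`a, b, c = S_M(0), S_M(1), S_M(2)`, and `(a + b)² < a (a + 2b + c)` is again `b² < a c`, which
only involves log-convexity of `B` below `M + 1`.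
-/

open Finset SimpleGraph

namespace Finpartition

lemma avoid_parts_of_mem {α : Type*} [GeneralizedBooleanAlgebra α] [DecidableEq α] {a b : α}
    (P : Finpartition a) (hb : b ∈ P.parts) : (P.avoid b).parts = P.parts.erase b := by
  ext c
  rw [mem_avoid, mem_erase]
  constructor
  · rintro ⟨d, hd, hdb, rfl⟩
    have hdisj : Disjoint d b := P.disjoint hd hb (by rintro rfl; exact hdb le_rfl)
    rw [hdisj.sdiff_eq_left]
    exact ⟨by rintro rfl; exact hdb le_rfl, hd⟩
  · rintro ⟨hcb, hc⟩
    have hdisj : Disjoint c b := P.disjoint hc hb hcb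
    exact ⟨c, hc, fun hle => P.ne_bot hc (hdisj.eq_bot_of_le hle), hdisj.sdiff_eq_left⟩

variable {α : Type*} [DecidableEq α]

lemma card_filter_part_eq {s t : Finset α} {a : α} (has : a ∈ s) (hst : s ⊆ t) :
    #{P : Finpartition t | P.part a = s} = Fintype.card (Finpartition (t \ s)) := by
  have hs : s ≠ ⊥ := ne_empty_of_mem has
  have hsQ (Q : Finpartition (t \ s)) : s ∉ Q.parts := fun h =>
    hs (disjoint_self.1 (sdiff_disjoint.mono_left (Q.le h)))
  rw [Fintype.card, eq_comm]
  refine card_bij' (fun Q _ => Q.extend hs sdiff_disjoint (sdiff_sup_cancel hst))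
    (fun P _ => P.avoid s) (fun Q _ => ?_) (by simp) (fun Q _ => ?_) (fun P hP => ?_)
  · simpa using part_eq_of_mem _ (mem_insert_self _ _) has
  · ext1
    rw [avoid_parts_of_mem _ (mem_insert_self _ _), extend_parts, erase_insert (hsQ Q)]
  · have hsP : s ∈ P.parts := (mem_filter.1 hP).2 ▸ P.part_mem.2 (hst has)
    ext1
    rw [extend_parts, avoid_parts_of_mem _ hsP, insert_erase hsP]

lemma card_insert_eq_sum_powerset {a : α} {t : Finset α} (ha : a ∉ t) :
    Fintype.card (Finpartition (insert a t)) =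
      ∑ u ∈ t.powerset, Fintype.card (Finpartition (t \ u)) := by
  have hpart (P : Finpartition (insert a t)) : a ∈ P.part a := P.mem_part (mem_insert_self a t)
  rw [Fintype.card, card_eq_sum_card_fiberwise (f := fun P => (P.part a).erase a)
    (t := t.powerset) fun P _ => ?_]
  · refine sum_congr rfl fun u hu => ?_
    have hau : a ∉ u := fun h => ha (mem_powerset.1 hu h)
    simp_rw [erase_eq_iff_eq_insert (hpart _) hau]
    rw [card_filter_part_eq (mem_insert_self a u) (insert_subset_insert a (mem_powerset.1 hu)),
      insert_sdiff_insert, sdiff_insert_of_notMem ha]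
  · rw [mem_coe, mem_powerset, ← subset_insert_iff]
    exact P.part_subset a

theorem card_eq_bell (s : Finset α) : Fintype.card (Finpartition s) = Nat.bell #s := by
  induction h : #s using Nat.strong_induction_on generalizing s with
  | _ n ih =>
  obtain rfl | ⟨a, ha⟩ := s.eq_empty_or_nonempty
  · subst h
    exact (Fintype.card_unique (α := Finpartition (⊥ : Finset α))).trans Nat.bell_zero.symm
  set t := s.erase a
  have hn : n = #t + 1 := by rw [← h, card_erase_add_one ha]
  rw [← insert_erase ha, card_insert_eq_sum_powerset (notMem_erase a s), hn, Nat.bell_succ,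
    ← Nat.range_succ_eq_Iic]
  simp_rw [← smul_eq_mul, ← sum_powerset_apply_card (fun i => Nat.bell (#t - i))]
  refine sum_congr rfl fun u hu => ?_
  have hut : u ⊆ t := mem_powerset.1 hu
  rw [ih _ (by rw [card_sdiff_of_subset hut]; omega) _ rfl, card_sdiff_of_subset hut]

end Finpartition

lemma bell_eq_nat_bell (n : ℕ) : bell n = Nat.bell n := by
  rw [bell, Finpartition.card_eq_bell, card_univ, Fintype.card_fin]

section BinomSum

variable {R : Type*} [CommSemiring R]

def binomSum (f : ℕ → R) (p m : ℕ) : R := ∑ i ∈ range (p + 1), (p.choose i : R) * f (m + i)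

@[simp]
lemma binomSum_zero (f : ℕ → R) (m : ℕ) : binomSum f 0 m = f m := by
  simp [binomSum]

lemma binomSum_succ (f : ℕ → R) (p m : ℕ) :
    binomSum f (p + 1) m = binomSum f p m + binomSum f p (m + 1) := by
  have hshift : binomSum f p (m + 1) =
      ∑ i ∈ range (p + 1), (p.choose i : R) * f (m + (i + 1)) :=
    sum_congr rfl fun i _ => by rw [add_right_comm, add_assoc]
  have hfirst : binomSum f p m =
      f m + ∑ i ∈ range (p + 1), (p.choose (i + 1) : R) * f (m + (i + 1)) := by
    rw [binomSum, sum_range_succ', sum_range_succ, Nat.choose_succ_self]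
    simp [add_comm]
  rw [binomSum, sum_range_succ', hshift, hfirst]
  simp [Nat.choose_succ_succ', add_mul, sum_add_distrib]
  ring

lemma binomSum_nonneg [PartialOrder R] [IsOrderedRing R] {f : ℕ → R} (hf : ∀ k, 0 ≤ f k)
    (p m : ℕ) : 0 ≤ binomSum f p m :=
  sum_nonneg fun _ _ => mul_nonneg (Nat.cast_nonneg _) (hf _)

end BinomSum

section LogConvex

variable {R : Type*} [CommSemiring R] [LinearOrder R] [IsStrictOrderedRing R] [ExistsAddOfLE R]

lemma two_mul_mul_le_mul_add_mul {a b c a' b' c' : R} (ha : 0 ≤ a) (hb : 0 ≤ b) (hc : 0 ≤ c)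
    (ha' : 0 ≤ a') (hb' : 0 ≤ b') (hc' : 0 ≤ c') (h : b ^ 2 ≤ a * c) (h' : b' ^ 2 ≤ a' * c') :
    2 * b * b' ≤ a * c' + a' * c := by
  refine (pow_le_pow_iff_left₀ (by positivity) (by positivity) two_ne_zero).1 ?_
  calc (2 * b * b') ^ 2 = 4 * b ^ 2 * b' ^ 2 := by ring
    _ ≤ 4 * (a * c) * (a' * c') := by gcongr
    _ = 4 * (a * c') * (a' * c) := by ring
    _ ≤ (a * c' + a' * c) ^ 2 := four_mul_le_sq_add _ _

lemma sq_add_lt_add_mul_add {a b c a' b' c' : R} (ha : 0 ≤ a) (hb : 0 ≤ b) (hc : 0 ≤ c)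
    (ha' : 0 ≤ a') (hb' : 0 ≤ b') (hc' : 0 ≤ c') (h : b ^ 2 < a * c) (h' : b' ^ 2 < a' * c') :
    (b + b') ^ 2 < (a + a') * (c + c') := by
  have hmid := two_mul_mul_le_mul_add_mul ha hb hc ha' hb' hc' h.le h'.le
  calc (b + b') ^ 2 = b ^ 2 + 2 * b * b' + b' ^ 2 := add_sq b b'
    _ < a * c + (a * c' + a' * c) + a' * c' :=
      add_lt_add_of_lt_of_le (add_lt_add_of_lt_of_le h hmid) h'.le
    _ = (a + a') * (c + c') := by ring

theorem binomSum_sq_lt_mul {f : ℕ → R} (hf₀ : ∀ k, 0 ≤ f k) {m p : ℕ}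
    (hf : ∀ k, m ≤ k → k ≤ m + p → f (k + 1) ^ 2 < f k * f (k + 2)) :
    binomSum f p (m + 1) ^ 2 < binomSum f p m * binomSum f p (m + 2) := by
  induction p generalizing m with
  | zero => simpa using hf m le_rfl le_rfl
  | succ p ih =>
    have h0 := ih fun k hmk hk => hf k hmk (by omega)
    have h1 := @ih (m + 1) fun k hmk hk => hf k (by omega) (by omega)
    simp only [binomSum_succ]
    exact sq_add_lt_add_mul_add (binomSum_nonneg hf₀ _ _) (binomSum_nonneg hf₀ _ _)
      (binomSum_nonneg hf₀ _ _) (binomSum_nonneg hf₀ _ _) (binomSum_nonneg hf₀ _ _)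
      (binomSum_nonneg hf₀ _ _) h0 h1

end LogConvex

lemma Nat.bell_succ_eq_binomSum (n : ℕ) : Nat.bell (n + 1) = binomSum Nat.bell n 0 := by
  rw [Nat.bell_succ', ← Nat.sum_antidiagonal_swap]
  simp only [Prod.fst_swap, Prod.snd_swap]
  rw [Nat.sum_antidiagonal_eq_sum_range_succ (fun i j => n.choose j * Nat.bell i)]
  refine sum_congr rfl fun i hi => ?_
  rw [Nat.choose_symm (Nat.lt_succ_iff.1 (mem_range.1 hi))]
  simp

theorem Nat.bell_succ_sq_lt_mul (n : ℕ) :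
    Nat.bell (n + 1) ^ 2 < Nat.bell n * Nat.bell (n + 2) := by
  induction n using Nat.strong_induction_on with
  | _ n ih =>
  obtain _ | M := n
  · simp
  have hlc := binomSum_sq_lt_mul (f := Nat.bell) (fun _ => Nat.zero_le _) (m := 0) (p := M)
    fun k _ hk => ih k (by omega)
  have e1 := Nat.bell_succ_eq_binomSum M
  have e2 := Nat.bell_succ_eq_binomSum (M + 1)
  have e3 := Nat.bell_succ_eq_binomSum (M + 2)
  simp only [binomSum_succ, zero_add] at hlc e2 e3
  rw [e1, e2, e3]
  nlinarith [hlc]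

/-- For all `n ≥ 1` and `p ≥ 0`,
`(∑ C(p+1,i) B_{n+i})(∑ C(p,i) B_{n+i}) < (∑ C(p+1,i) B_{n+i-1})(∑ C(p,i) B_{n+i+1})`. -/
theorem stmt_8 (n p : ℕ) (hn : 1 ≤ n) :
    (∑ i ∈ Finset.range (p + 2), (p + 1).choose i * bell (n + i)) *
      (∑ i ∈ Finset.range (p + 1), p.choose i * bell (n + i)) <
    (∑ i ∈ Finset.range (p + 2), (p + 1).choose i * bell (n + i - 1)) *
      (∑ i ∈ Finset.range (p + 1), p.choose i * bell (n + i + 1)) := by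
  obtain ⟨m, rfl⟩ := Nat.exists_eq_add_of_le' hn
  have hlc := binomSum_sq_lt_mul (f := Nat.bell) (fun _ => Nat.zero_le _) (m := m) (p := p)
    fun k _ _ => Nat.bell_succ_sq_lt_mul k
  have hS (q k : ℕ) (g : ℕ → ℕ) (hg : ∀ i, g i = k + i) :
      ∑ i ∈ range (q + 1), q.choose i * bell (g i) = binomSum Nat.bell q k := by
    simp [binomSum, bell_eq_nat_bell, hg]
  have e1 : ∑ i ∈ range (p + 2), (p + 1).choose i * bell (m + 1 + i) =
      binomSum Nat.bell (p + 1) (m + 1) := hS _ _ _ fun _ => rfl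
  have e2 : ∑ i ∈ range (p + 1), p.choose i * bell (m + 1 + i) = binomSum Nat.bell p (m + 1) :=
    hS _ _ _ fun _ => rfl
  have e3 : ∑ i ∈ range (p + 2), (p + 1).choose i * bell (m + 1 + i - 1) =
      binomSum Nat.bell (p + 1) m := hS _ _ _ fun _ => by omega
  have e4 : ∑ i ∈ range (p + 1), p.choose i * bell (m + 1 + i + 1) =
      binomSum Nat.bell p (m + 2) := hS _ _ _ fun _ => by omega
  rw [e1, e2, e3, e4, binomSum_succ, binomSum_succ]
  nlinarith [hlc]
end
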